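/- arXiv:2111.04832 — 6 statements merged into one kernel-verified Lean document; each statement's English description precedes it below -/
import Mathlib

section
/- There exists a T0 non-Alexandroff space X whose hyperspace 2^X with the upper semifinite topology is Alexandroff. Concretely, let X = {1/n : n ∈ ℕ} ∪ {0} with the topology induced from [0,1] with open sets the half-intervals [0,t), t ∈ (0,1): then X is T0 and not Alexandroff, but 2^X_u is Alexandroff. -/
open Set TopologicalSpace

/-- The hyperspace of nonempty closed subsets of a topological space `X`. -/
def Hyp (X : Type*) [TopologicalSpace X] := {C : Set X // C.Nonempty ∧ IsClosed C}

/-- The upper semifinite topology, generated by `B(U) = {C | C ⊆ U}` for `U` open. -/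
instance Hyp.topologicalSpace (X : Type*) [TopologicalSpace X] : TopologicalSpace (Hyp X) :=
  TopologicalSpace.generateFrom {S | ∃ U : Set X, IsOpen U ∧ S = {C : Hyp X | C.1 ⊆ U}}

/-- The space `X = {1/n : n ∈ ℕ} ∪ {0}` with the topology induced from the topology on
`[0,1]` whose proper open sets are the half-intervals `[0,t)`, `t ∈ (0,1)`. -/
def Xex : Type := {x : ℝ // x = 0 ∨ ∃ n : ℕ, x = 1 / (n + 1)}

instance : TopologicalSpace Xex :=
  TopologicalSpace.generateFrom
    {S | ∃ t ∈ Set.Ioo (0 : ℝ) 1, S = {x : Xex | (x.1 : ℝ) < t}}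

open Filter Topology

/-!
The point `1` of `Xex` lies in no proper open set, so it belongs to every nonempty closed set;
hence every basic open set `{C | C ⊆ U}` of the hyperspace is empty or everything, and the
hyperspace is indiscrete, in particular Alexandroff. The space itself is not Alexandroff because
`1 / (n + 1) → 0` while the intersection of all the open sets `[0, t)` is `{0}`.
-/

theorem mem_of_isClosed_of_nhds_eq_top {X : Type*} [TopologicalSpace X] {x : X}
    (hx : 𝓝 x = ⊤) {C : Set X} (hne : C.Nonempty) (hC : IsClosed C) : x ∈ C := by
  by_contra hxC
  have hcompl : Cᶜ = univ := mem_top.1 (hx ▸ hC.isOpen_compl.mem_nhds hxC)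
  obtain ⟨y, hy⟩ := hne
  exact (hcompl ▸ mem_univ y) hy

theorem Hyp.indiscreteTopology_of_nhds_eq_top {X : Type*} [TopologicalSpace X] {x : X}
    (hx : 𝓝 x = ⊤) : IndiscreteTopology (Hyp X) := by
  refine ⟨eq_top_iff.2 <| le_generateFrom_iff_subset_isOpen.2 ?_⟩
  rintro _ ⟨U, hU, rfl⟩
  refine (isOpen_top_iff _).2 <| (eq_empty_or_nonempty _).imp_right fun ⟨C, hCU⟩ => ?_
  have hU_univ : U = univ :=
    mem_top.1 (hx ▸ hU.mem_nhds (hCU (mem_of_isClosed_of_nhds_eq_top hx C.2.1 C.2.2)))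
  exact eq_univ_of_forall fun D => hU_univ ▸ subset_univ D.1

namespace Xex

theorem nonneg (x : Xex) : 0 ≤ x.1 := by
  rcases x.2 with h | ⟨n, h⟩
  · exact h.ge
  · rw [h]; positivity

theorem le_one (x : Xex) : x.1 ≤ 1 := by
  rcases x.2 with h | ⟨n, h⟩ <;> rw [h]
  · exact zero_le_one
  · exact div_le_one_of_le₀ (by simp) (by positivity)

def zero : Xex := ⟨0, Or.inl rfl⟩

noncomputable def invSucc (n : ℕ) : Xex := ⟨1 / (n + 1), Or.inr ⟨n, rfl⟩⟩

theorem isOpen_setOf_lt {t : ℝ} (ht : t ∈ Ioo 0 1) : IsOpen {x : Xex | x.1 < t} :=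
  isOpen_generateFrom_of_mem ⟨t, ht, rfl⟩

theorem nhds_invSucc_zero : 𝓝 (invSucc 0) = ⊤ := by
  refine nhds_generateFrom.trans (iInf₂_eq_top.2 ?_)
  rintro _ ⟨hmem, t, ⟨-, ht⟩, rfl⟩
  exact absurd (hmem.trans ht) (by norm_num [invSucc])

theorem tendsto_invSucc : Tendsto invSucc atTop (𝓝 zero) := by
  refine tendsto_nhds_generateFrom_iff.2 ?_
  rintro _ ⟨t, ⟨ht, -⟩, rfl⟩ -
  exact (tendsto_one_div_add_atTop_nhds_zero_nat (𝕜 := ℝ)).eventually (gt_mem_nhds ht)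

theorem not_inseparable_of_lt {x y : Xex} (hxy : x.1 < y.1) : ¬Inseparable x y := by
  have hmid : (x.1 + y.1) / 2 ∈ Ioo (0 : ℝ) 1 := by
    constructor <;> linarith [nonneg x, le_one y]
  intro h
  have hx : x.1 < (x.1 + y.1) / 2 := by linarith
  have hy : y.1 < (x.1 + y.1) / 2 := (h.mem_open_iff (isOpen_setOf_lt hmid)).1 hx
  linarith

instance : T0Space Xex :=
  ⟨fun x y h => Subtype.ext <| by
    rcases lt_trichotomy x.1 y.1 with hlt | heq | hgt
    · exact absurd h (not_inseparable_of_lt hlt)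
    · exact heq
    · exact absurd h.symm (not_inseparable_of_lt hgt)⟩

theorem not_alexandrovDiscrete : ¬AlexandrovDiscrete Xex := by
  intro _
  have hV : IsOpen (⋂ t ∈ Ioo (0 : ℝ) 1, {x : Xex | x.1 < t}) :=
    isOpen_iInter₂ fun _ ht => isOpen_setOf_lt ht
  have hzero : zero ∈ ⋂ t ∈ Ioo (0 : ℝ) 1, {x : Xex | x.1 < t} :=
    mem_iInter₂.2 fun _ ht => ht.1
  obtain ⟨n, hn⟩ := (tendsto_invSucc.eventually (hV.mem_nhds hzero)).exists
  have hlt : (1 : ℝ) / (n + 1) < 1 / (n + 2) :=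
    mem_iInter₂.1 hn (1 / (n + 2)) ⟨by positivity, by rw [div_lt_one (by positivity)]; linarith⟩
  rw [div_lt_div_iff_of_pos_left one_pos (by positivity) (by positivity)] at hlt
  linarith

end Xex

/-- There is a `T0` non-Alexandroff space whose upper semifinite hyperspace is
Alexandroff: concretely, `Xex` is `T0` and not Alexandroff, but `2^{Xex}_u` is Alexandroff. -/
theorem stmt2 :
    T0Space Xex ∧ ¬ AlexandrovDiscrete Xex ∧ AlexandrovDiscrete (Hyp Xex) :=
  have := Hyp.indiscreteTopology_of_nhds_eq_top Xex.nhds_invSucc_zero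
  ⟨inferInstance, Xex.not_alexandrovDiscrete, inferInstance⟩
end

section
/- For every set X and every point A ∈ 2^{X_d}_f, the space 2^{X_d}_f strongly deformation retracts onto {A}; in particular 2^{X_d}_f is contractible. An explicit homotopy H : 2^{X_d}_f × [0,1] → 2^{X_d}_f given by H(C,t) = A for t < 1/2, H(C,1/2) = C ∪ A, and H(C,t) = C for t > 1/2 is continuous. -/
open Set Topology TopologicalSpace

/-- The set of nonempty subsets of `X`: the hyperspace of the discrete space on `X`. -/
def NESet (X : Type*) := {C : Set X // C.Nonempty}

/-- The upper semifinite topology on the hyperspace of the discrete space `X`,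
generated by the sets `B(U) = {C | C ⊆ U}` for `U ⊆ X`. -/
instance NESet.topologicalSpace (X : Type*) : TopologicalSpace (NESet X) :=
  TopologicalSpace.generateFrom {S | ∃ U : Set X, S = {C : NESet X | C.1 ⊆ U}}

/-- The set of nonempty finite subsets of `X`. -/
def NEFin (X : Type*) := {C : Set X // C.Nonempty ∧ C.Finite}

/-- Inclusion of the nonempty finite subsets into the nonempty subsets. -/
noncomputable def NEFin.incl {X : Type*} (C : NEFin X) : NESet X := ⟨C.1, C.2.1⟩

/-- The subspace topology on the nonempty finite subsets, induced by the
upper semifinite topology. -/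
noncomputable instance NEFin.topologicalSpace (X : Type*) : TopologicalSpace (NEFin X) :=
  TopologicalSpace.induced NEFin.incl inferInstance

open unitInterval in
/-- The homotopy `H(C,t) = A` for `t < 1/2`, `H(C,1/2) = C ∪ A`, `H(C,t) = C` for `t > 1/2`. -/
noncomputable def Hmap {X : Type*} (A : NEFin X) : NEFin X × I → NEFin X := fun p =>
  if ((p.2 : ℝ) < 1 / 2) then A
  else if ((p.2 : ℝ) = 1 / 2) then ⟨p.1.1 ∪ A.1, p.1.2.1.inl, p.1.2.2.union A.2.2⟩
  else p.1

/-! The preimage under `Hmap A` of a basic open set `{C | C ⊆ U}` consists of the points with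
`t < 1/2` (if `A ⊆ U`) together with the points `(C, t)` with `C ⊆ U` and either `t > 1/2` or
`A ⊆ U`; both pieces are open in the product. -/

open unitInterval

theorem contractibleSpace_of_continuous {Y : Type*} [TopologicalSpace Y] (H : Y × I → Y)
    (hH : Continuous H) (y : Y) (h₀ : ∀ x, H (x, 0) = y) (h₁ : ∀ x, H (x, 1) = x) :
    ContractibleSpace Y := by
  rw [contractible_iff_id_nullhomotopic]
  exact ⟨y, ⟨ContinuousMap.Homotopy.symm
    { toFun := fun p => H (p.2, p.1)
      continuous_toFun := hH.comp continuous_swap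
      map_zero_left := h₀
      map_one_left := h₁ }⟩⟩

namespace NEFin

variable {X : Type*}

theorem isOpen_setOf_subset (U : Set X) : IsOpen {C : NEFin X | C.1 ⊆ U} :=
  isOpen_induced (s := {C : NESet X | C.1 ⊆ U}) (isOpen_generateFrom_of_mem ⟨U, rfl⟩)

theorem continuous_iff {Y : Type*} [TopologicalSpace Y] {f : Y → NEFin X} :
    Continuous f ↔ ∀ U : Set X, IsOpen (f ⁻¹' {C | C.1 ⊆ U}) := by
  rw [continuous_induced_rng, continuous_generateFrom_iff]
  constructor
  · exact fun h U => h _ ⟨U, rfl⟩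
  · rintro h _ ⟨U, rfl⟩
    exact h U

end NEFin

section Hmap

variable {X : Type*} (A C : NEFin X) {t : I}

theorem Hmap_of_lt (h : (t : ℝ) < 1 / 2) : Hmap A (C, t) = A :=
  if_pos h

theorem Hmap_of_eq (h : (t : ℝ) = 1 / 2) : (Hmap A (C, t)).1 = C.1 ∪ A.1 :=
  congrArg (fun D : NEFin X => D.1) ((if_neg h.not_lt).trans (if_pos h))

theorem Hmap_of_gt (h : 1 / 2 < (t : ℝ)) : Hmap A (C, t) = C :=
  (if_neg (not_lt_of_gt h)).trans (if_neg h.ne')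

theorem Hmap_subset_iff (U : Set X) :
    (Hmap A (C, t)).1 ⊆ U ↔
      (t : ℝ) < 1 / 2 ∧ A.1 ⊆ U ∨ C.1 ⊆ U ∧ (A.1 ⊆ U ∨ 1 / 2 < (t : ℝ)) := by
  rcases lt_trichotomy (t : ℝ) (1 / 2) with h | h | h
  · rw [Hmap_of_lt A C h]
    simp only [h, true_and, not_lt_of_gt h, or_false]
    exact ⟨Or.inl, fun h' => h'.elim id And.right⟩
  · rw [Hmap_of_eq A C h, union_subset_iff]
    simp only [h, lt_irrefl, false_and, or_false, false_or]
  · rw [Hmap_of_gt A C h]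
    simp only [not_lt_of_gt h, h, false_and, or_true, and_true, false_or]

theorem continuous_Hmap : Continuous (Hmap A) := by
  refine NEFin.continuous_iff.2 fun U => ?_
  have hpre : Hmap A ⁻¹' {C | C.1 ⊆ U} =
      {p | (p.2 : ℝ) < 1 / 2 ∧ A.1 ⊆ U} ∪ {p | p.1.1 ⊆ U ∧ (A.1 ⊆ U ∨ 1 / 2 < (p.2 : ℝ))} :=
    Set.ext fun p => Hmap_subset_iff A p.1 U
  have hlt : IsOpen {p : NEFin X × I | (p.2 : ℝ) < 1 / 2} :=
    isOpen_lt (continuous_subtype_val.comp continuous_snd) continuous_const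
  have hgt : IsOpen {p : NEFin X × I | 1 / 2 < (p.2 : ℝ)} :=
    isOpen_lt continuous_const (continuous_subtype_val.comp continuous_snd)
  rw [hpre]
  exact (hlt.and isOpen_const).union
    (((NEFin.isOpen_setOf_subset U).preimage continuous_fst).and (isOpen_const.union hgt))

theorem Hmap_zero : Hmap A (C, 0) = A :=
  Hmap_of_lt A C (by norm_num)

theorem Hmap_one : Hmap A (C, 1) = C :=
  Hmap_of_gt A C (by norm_num)

theorem Hmap_self (t : I) : Hmap A (A, t) = A := by
  rcases lt_trichotomy (t : ℝ) (1 / 2) with h | h | h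
  · exact Hmap_of_lt A A h
  · exact Subtype.ext ((Hmap_of_eq A A h).trans (union_self A.1))
  · exact Hmap_of_gt A A h

end Hmap

open unitInterval in
/-- For every set `X` and every point `A` of `2^{X_d}_f`, the explicit homotopy `Hmap A` is
continuous, is a strong deformation retraction of `2^{X_d}_f` onto `{A}`; in particular
`2^{X_d}_f` is contractible. -/
theorem stmt7 (X : Type*) (A : NEFin X) :
    Continuous (Hmap A) ∧
    (∀ C : NEFin X, Hmap A (C, 0) = A) ∧
    (∀ C : NEFin X, Hmap A (C, 1) = C) ∧
    (∀ t : I, Hmap A (A, t) = A) ∧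
    ContractibleSpace (NEFin X) :=
  ⟨continuous_Hmap A, Hmap_zero A, Hmap_one A, Hmap_self A,
    contractibleSpace_of_continuous (Hmap A) (continuous_Hmap A) A (Hmap_zero A) (Hmap_one A)⟩
end

section
/- A map f : 2^{X_d}_f → 2^{X_d}_f is a homeomorphism if and only if there exists a bijection γ : X → X such that f(C) = γ(C) = {γ(c) : c ∈ C} for every C; hence the homeomorphism group of 2^{X_d}_f is isomorphic to the symmetric group on X. -/
/-!
The topology on `2^{X_d}_f` is the Alexandrov topology of the inclusion order: its open sets are
exactly the families closed under nonempty subsets. Hence homeomorphisms are the same as order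
automorphisms for `⊆`. Such an automorphism permutes the minimal elements, which are the
singletons, and every set is determined by the singletons below it, so the automorphism is the
image map of the induced permutation of `X`.
-/

open Set Topology TopologicalSpace

section LowerSetTopology

variable {α β : Type*} [Preorder α] [Preorder β]

lemma Topology.IsLowerSet.induced [TopologicalSpace β] [Topology.IsLowerSet β] (f : α ↪o β) :
    @Topology.IsLowerSet α (.induced f ‹_›) _ := by
  let _ : TopologicalSpace α := .induced f ‹_›
  refine ⟨TopologicalSpace.ext_iff.2 fun S => ?_⟩
  change IsOpen S ↔ IsLowerSet S
  rw [isOpen_induced_iff]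
  simp_rw [Topology.IsLowerSet.isOpen_iff_isLowerSet]
  constructor
  · rintro ⟨T, hT, rfl⟩
    exact hT.preimage f.monotone
  · refine fun hS => ⟨lowerClosure (f '' S), (lowerClosure _).lower, ?_⟩
    ext a
    simp only [mem_preimage, SetLike.mem_coe, mem_lowerClosure, exists_mem_image, f.le_iff_le]
    exact ⟨fun ⟨b, hb, hab⟩ => hS hab hb, fun ha => ⟨a, ha, le_rfl⟩⟩

variable [TopologicalSpace α] [TopologicalSpace β] [Topology.IsLowerSet α] [Topology.IsLowerSet β]

def Homeomorph.toOrderIsoOfIsLowerSet (h : α ≃ₜ β) : α ≃o β :=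
  h.toEquiv.toOrderIso (Topology.IsLowerSet.monotone_iff_continuous.2 h.continuous)
    (Topology.IsLowerSet.monotone_iff_continuous.2 h.symm.continuous)

end LowerSetTopology

namespace NESet

variable {X : Type*}

instance : PartialOrder (NESet X) := Subtype.partialOrder _

instance : Topology.IsLowerSet (NESet X) := by
  refine ⟨le_antisymm (fun S hS => ?_) (le_generateFrom ?_)⟩
  · change IsLowerSet S at hS
    have hS_eq : S = ⋃ C ∈ S, {D : NESet X | D.1 ⊆ C.1} := by
      ext D
      simp only [mem_iUnion]
      exact ⟨fun hD => ⟨D, hD, fun _ h => h⟩, fun ⟨C, hC, hDC⟩ => hS hDC hC⟩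
    rw [hS_eq]
    exact isOpen_biUnion fun C _ => isOpen_generateFrom_of_mem ⟨C.1, rfl⟩
  · rintro _ ⟨U, rfl⟩ C D hDC hC
    exact Subset.trans hDC hC

end NESet

namespace NEFin

variable {X Y : Type*}

instance : PartialOrder (NEFin X) := Subtype.partialOrder _

noncomputable def inclOrderEmbedding : NEFin X ↪o NESet X :=
  OrderEmbedding.ofMapLEIff incl fun _ _ => Iff.rfl

instance : Topology.IsLowerSet (NEFin X) := Topology.IsLowerSet.induced inclOrderEmbedding

protected def singleton (x : X) : NEFin X := ⟨{x}, singleton_nonempty x, finite_singleton x⟩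

lemma singleton_le_iff {x : X} {C : NEFin X} : NEFin.singleton x ≤ C ↔ x ∈ C.1 :=
  Set.singleton_subset_iff

lemma singleton_injective : Function.Injective (NEFin.singleton (X := X)) :=
  fun _ _ h => Set.singleton_injective (congrArg Subtype.val h)

lemma isMin_iff {C : NEFin X} : IsMin C ↔ ∃ x, C = NEFin.singleton x := by
  constructor
  · intro hC
    obtain ⟨x, hx⟩ := C.2.1
    exact ⟨x, le_antisymm (hC (singleton_le_iff.2 hx)) (singleton_le_iff.2 hx)⟩
  · rintro ⟨x, rfl⟩ D hD
    obtain ⟨y, hy⟩ := D.2.1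
    obtain rfl : y = x := hD hy
    exact singleton_le_iff.2 hy

lemma exists_orderIso_apply_singleton (φ : NEFin X ≃o NEFin Y) (x : X) :
    ∃ y, φ (NEFin.singleton x) = NEFin.singleton y :=
  isMin_iff.1 (φ.isMin_apply.2 (isMin_iff.2 ⟨x, rfl⟩))

theorem exists_equiv_of_orderIso (φ : NEFin X ≃o NEFin Y) :
    ∃ γ : X ≃ Y, ∀ C, (φ C).1 = γ '' C.1 := by
  choose g hg using exists_orderIso_apply_singleton φ
  choose g' hg' using exists_orderIso_apply_singleton φ.symm
  let γ : X ≃ Y :=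
    { toFun := g
      invFun := g'
      left_inv := fun x => singleton_injective (by rw [← hg', ← hg, φ.symm_apply_apply])
      right_inv := fun y => singleton_injective (by rw [← hg, ← hg', φ.apply_symm_apply]) }
  refine ⟨γ, fun C => ?_⟩
  ext y
  rw [γ.image_eq_preimage_symm, mem_preimage, ← singleton_le_iff, ← φ.symm_apply_le, hg',
    singleton_le_iff]
  rfl

def imageHomeomorph (γ : X ≃ Y) : NEFin X ≃ₜ NEFin Y where
  toFun C := ⟨γ '' C.1, C.2.1.image γ, C.2.2.image γ⟩
  invFun C := ⟨γ.symm '' C.1, C.2.1.image γ.symm, C.2.2.image γ.symm⟩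
  left_inv C := Subtype.ext (γ.symm_image_image C.1)
  right_inv C := Subtype.ext (γ.image_symm_image C.1)
  continuous_toFun := Topology.IsLowerSet.monotone_iff_continuous.1 fun _ _ h => image_mono h
  continuous_invFun := Topology.IsLowerSet.monotone_iff_continuous.1 fun _ _ h => image_mono h

theorem isHomeomorph_iff {f : NEFin X → NEFin Y} :
    IsHomeomorph f ↔ ∃ γ : X ≃ Y, ∀ C, (f C).1 = γ '' C.1 := by
  constructor
  · intro hf
    obtain ⟨h, rfl⟩ := isHomeomorph_iff_exists_homeomorph.1 hf
    exact exists_equiv_of_orderIso h.toOrderIsoOfIsLowerSet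
  · rintro ⟨γ, hγ⟩
    obtain rfl : f = imageHomeomorph γ := funext fun C => Subtype.ext (hγ C)
    exact (imageHomeomorph γ).isHomeomorph

def imageHomeomorphHom : Equiv.Perm X →* (NEFin X ≃ₜ NEFin X) where
  toFun := imageHomeomorph
  map_one' := Homeomorph.ext fun C => Subtype.ext (image_id C.1)
  map_mul' γ δ := Homeomorph.ext fun C => Subtype.ext (image_image γ δ C.1).symm

lemma imageHomeomorphHom_bijective : Function.Bijective (imageHomeomorphHom (X := X)) := by
  refine ⟨fun γ δ hγδ => Equiv.ext fun x => ?_, fun h => ?_⟩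
  · have : γ '' {x} = δ '' {x} :=
      congrArg (fun h : NEFin X ≃ₜ NEFin X => (h (NEFin.singleton x)).1) hγδ
    simpa using this
  · obtain ⟨γ, hγ⟩ := isHomeomorph_iff.1 h.isHomeomorph
    exact ⟨γ, Homeomorph.ext fun C => Subtype.ext (hγ C).symm⟩

noncomputable def homeomorphMulEquivPerm : (NEFin X ≃ₜ NEFin X) ≃* Equiv.Perm X :=
  (MulEquiv.ofBijective imageHomeomorphHom imageHomeomorphHom_bijective).symm

end NEFin

/-- A map `f : 2^{X_d}_f → 2^{X_d}_f` is a homeomorphism iff it is the elevation of a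
bijection `γ : X → X` (i.e. `f(C) = γ(C)` for all `C`); hence the homeomorphism group of
`2^{X_d}_f` is isomorphic to the symmetric group on `X`. -/
theorem stmt8 (X : Type*) :
    (∀ f : NEFin X → NEFin X,
      IsHomeomorph f ↔ ∃ γ : X ≃ X, ∀ C : NEFin X, (f C).1 = γ '' C.1) ∧
    ∃ e : (NEFin X ≃ₜ NEFin X) ≃ Equiv.Perm X,
      ∀ f g : NEFin X ≃ₜ NEFin X, e (g.trans f) = e f * e g :=
  ⟨fun _ => NEFin.isHomeomorph_iff, NEFin.homeomorphMulEquivPerm.toEquiv,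
    fun f g => map_mul NEFin.homeomorphMulEquivPerm f g⟩
end

section
/- For C, D ∈ 2^{X_d}_f, there exists a homeomorphism f : 2^{X_d}_f → 2^{X_d}_f with f(C) = D if and only if card(C) = card(D). -/
open Set Topology TopologicalSpace

/-! Homeomorphisms preserve the specialization preorder, which on `NEFin X` is inclusion. So a
homeomorphism `f` maps the `2 ^ |C| - 1` points below `C` bijectively onto those below `f C`,
forcing `|f C| = |C|`. Conversely, a permutation of `X` carrying `C` onto `D` exists when
`|C| = |D|`, and taking images under it is a homeomorphism. -/

namespace NESet

variable {X Y : Type*}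

theorem specializes_iff {A B : NESet X} : A ⤳ B ↔ A.1 ⊆ B.1 := by
  simp only [specializes_iff_pure, nhds_generateFrom, le_iInf_iff, Filter.le_principal_iff,
    Filter.mem_pure]
  refine ⟨fun h => h _ ⟨subset_refl B.1, B.1, rfl⟩, ?_⟩
  rintro hAB _ ⟨hB, U, rfl⟩
  exact hAB.trans hB

def map (f : X → Y) (C : NESet X) : NESet Y := ⟨f '' C.1, C.2.image f⟩

theorem continuous_map (f : X → Y) : Continuous (map f) := by
  refine continuous_generateFrom_iff.2 ?_
  rintro _ ⟨U, rfl⟩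
  exact isOpen_generateFrom_of_mem ⟨f ⁻¹' U, Set.ext fun _ => image_subset_iff⟩

end NESet

namespace NEFin

variable {X Y : Type*}

theorem specializes_iff {A B : NEFin X} : A ⤳ B ↔ A.1 ⊆ B.1 :=
  (IsInducing.induced incl).specializes_iff.symm.trans NESet.specializes_iff

theorem subset_iff_of_homeomorph (f : NEFin X ≃ₜ NEFin Y) {A B : NEFin X} :
    (f A).1 ⊆ (f B).1 ↔ A.1 ⊆ B.1 := by
  rw [← specializes_iff, ← specializes_iff, f.isInducing.specializes_iff]

noncomputable def map (f : X → Y) (C : NEFin X) : NEFin Y :=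
  ⟨f '' C.1, C.2.1.image f, C.2.2.image f⟩

theorem continuous_map (f : X → Y) : Continuous (map f) :=
  continuous_induced_rng.2 <| show Continuous (NESet.map f ∘ incl) from
    (NESet.continuous_map f).comp continuous_induced_dom

noncomputable def homeomorphOfEquiv (e : X ≃ Y) : NEFin X ≃ₜ NEFin Y where
  toFun := map e
  invFun := map e.symm
  left_inv A := Subtype.ext (e.symm_image_image A.1)
  right_inv A := Subtype.ext (e.image_symm_image A.1)
  continuous_toFun := continuous_map e
  continuous_invFun := continuous_map e.symm

theorem card_setOf_subset (C : NEFin X) :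
    Nat.card {A : NEFin X // A.1 ⊆ C.1} = 2 ^ C.1.ncard - 1 := by
  let e : {A : NEFin X // A.1 ⊆ C.1} ≃ ↥(𝒫 C.1 \ {∅}) :=
    { toFun A := ⟨A.1.1, A.2, A.1.2.1.ne_empty⟩
      invFun t := ⟨⟨t.1, nonempty_iff_ne_empty.2 t.2.2, C.2.2.subset t.2.1⟩, t.2.1⟩
      left_inv _ := rfl
      right_inv _ := rfl }
  rw [Nat.card_congr e, Nat.card_coe_set_eq, ncard_sdiff_singleton_of_mem (empty_subset _),
    ncard_powerset _ C.2.2]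

theorem ncard_eq_of_homeomorph (f : NEFin X ≃ₜ NEFin Y) (C : NEFin X) :
    (f C).1.ncard = C.1.ncard := by
  have hcard := Nat.card_congr <| f.toEquiv.subtypeEquiv (p := fun A => A.1 ⊆ C.1)
    (q := fun A => A.1 ⊆ (f C).1) fun _ => (subset_iff_of_homeomorph f).symm
  rw [card_setOf_subset, card_setOf_subset] at hcard
  exact Nat.pow_right_injective le_rfl <|
    Nat.sub_one_cancel (Nat.two_pow_pos _) (Nat.two_pow_pos _) hcard.symm

end NEFin

theorem Set.exists_perm_image_eq_of_ncard_eq {X : Type*} {s t : Set X} (hs : s.Finite)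
    (ht : t.Finite) (h : s.ncard = t.ncard) : ∃ σ : Equiv.Perm X, σ '' s = t := by
  classical
  have : Finite s := hs
  have : Finite t := ht
  have : Finite {x | x ∈ s} := hs
  have hst : Nat.card s = Nat.card t := by rwa [Nat.card_coe_set_eq, Nat.card_coe_set_eq]
  obtain ⟨e⟩ := Finite.card_eq.1 hst
  refine ⟨Equiv.extendSubtype e, eq_of_subset_of_ncard_le ?_ ?_ ht⟩
  · rintro _ ⟨x, hx, rfl⟩
    exact Equiv.extendSubtype_mem e x hx
  · rw [ncard_image_of_injective _ (Equiv.injective _), h]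

/-- For `C, D ∈ 2^{X_d}_f`, there is a self-homeomorphism of `2^{X_d}_f` taking `C` to `D`
if and only if `C` and `D` have the same cardinality. -/
theorem stmt9 (X : Type*) (C D : NEFin X) :
    (∃ f : NEFin X ≃ₜ NEFin X, f C = D) ↔ C.1.ncard = D.1.ncard := by
  constructor
  · rintro ⟨f, rfl⟩
    exact (NEFin.ncard_eq_of_homeomorph f C).symm
  · intro h
    obtain ⟨σ, hσ⟩ := Set.exists_perm_image_eq_of_ncard_eq C.2.2 D.2.2 h
    exact ⟨NEFin.homeomorphOfEquiv σ, Subtype.ext hσ⟩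
end

section
/- For any set X, the following are equivalent: (i) X is finite; (ii) 2^{X_d}_f is compact; (iii) 2^{X_d}_f is paracompact; (iv) 2^{X_d}_f is strongly locally finite. -/
open Set Topology TopologicalSpace

/-! In `2^{X_d}_f` the open sets are exactly the down-closed sets, so the minimal
neighbourhood of `C` is `2^C` and the closure of `{C}` consists of all supersets of `C`.
If `X` is infinite and `x ∈ X`, the closure of `{{x}}` therefore contains the infinitely
many pairs `{x, y}`; and a locally finite open refinement of the cover `{2^C}` has only
finitely many members containing `{x}`, while every pair `{x, y}` lies in one of them,
so `X` would be covered by finitely many finite sets. -/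

namespace NESet

variable {X : Type*}

theorem mem_of_subset_of_isOpen {V : Set (NESet X)} (hV : IsOpen V) {C D : NESet X}
    (hC : C ∈ V) (hD : D.1 ⊆ C.1) : D ∈ V := by
  induction hV generalizing C with
  | basic S hS =>
    obtain ⟨U, rfl⟩ := hS
    exact hD.trans hC
  | univ => trivial
  | inter S T _ _ ihS ihT => exact ⟨ihS hC.1 hD, ihT hC.2 hD⟩
  | sUnion 𝒮 _ ih =>
    obtain ⟨S, hS, hCS⟩ := hC
    exact ⟨S, hS, ih S hS hCS hD⟩

end NESet

namespace NEFin

variable {X : Type*}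

instance [Finite X] : Finite (NEFin X) :=
  Finite.of_injective (fun C : NEFin X => C.1) fun _ _ => Subtype.ext

/-- The set `2^C` of nonempty subsets of `C`. -/
def subsets (C : NEFin X) : Set (NEFin X) := {D | D.1 ⊆ C.1}

theorem mem_subsets_self (C : NEFin X) : C ∈ C.subsets := subset_refl C.1

theorem isOpen_subsets (C : NEFin X) : IsOpen C.subsets :=
  isOpen_induced_iff.2
    ⟨{D : NESet X | D.1 ⊆ C.1}, isOpen_generateFrom_of_mem ⟨C.1, rfl⟩, rfl⟩

theorem subsets_subset_of_isOpen {V : Set (NEFin X)} (hV : IsOpen V) {C : NEFin X}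
    (hC : C ∈ V) : C.subsets ⊆ V := by
  obtain ⟨W, hW, rfl⟩ := isOpen_induced_iff.1 hV
  exact fun D hD => NESet.mem_of_subset_of_isOpen hW hC hD

theorem mem_closure_singleton_of_subset {C D : NEFin X} (h : C.1 ⊆ D.1) :
    D ∈ closure {C} :=
  mem_closure_iff.2 fun _ hV hD => ⟨C, subsets_subset_of_isOpen hV hD h, rfl⟩

def single (x : X) : NEFin X := ⟨{x}, singleton_nonempty x, finite_singleton x⟩

def pair (x y : X) : NEFin X := ⟨{x, y}, insert_nonempty x {y}, (finite_singleton y).insert x⟩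

theorem pair_injective (x : X) : Function.Injective (pair x) := fun a b h => by
  have h' : ({x, a} : Set X) = {x, b} := congrArg Subtype.val h
  rcases pair_eq_pair_iff.1 h' with ⟨-, rfl⟩ | ⟨rfl, rfl⟩ <;> rfl

theorem single_subset_pair (x y : X) : (single x).1 ⊆ (pair x y).1 :=
  singleton_subset_iff.2 (mem_insert x {y})

theorem finite_of_finite_closure_single (x : X) (h : (closure {single x}).Finite) :
    Finite X :=
  have : Finite (closure {single x}) := h
  Finite.of_injective (fun y => (⟨pair x y, mem_closure_singleton_of_subset
    (single_subset_pair x y)⟩ : closure {single x}))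
    fun _ _ hab => pair_injective x (congrArg Subtype.val hab)

theorem finite_of_paracompactSpace [ParacompactSpace (NEFin X)] : Finite X := by
  rcases isEmpty_or_nonempty X with _ | ⟨⟨x⟩⟩
  · infer_instance
  obtain ⟨v, hv_open, hv_cover, hv_lf, hv_sub⟩ :=
    precise_refinement (X := NEFin X) subsets isOpen_subsets
      (iUnion_eq_univ_iff.2 fun C => ⟨C, mem_subsets_self C⟩)
  have hcover : univ ⊆ ⋃ C ∈ {C | single x ∈ v C}, C.1 := by
    intro y _
    obtain ⟨C, hC⟩ := iUnion_eq_univ_iff.1 hv_cover (pair x y)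
    have hxC : single x ∈ v C :=
      subsets_subset_of_isOpen (hv_open C) hC (single_subset_pair x y)
    exact mem_biUnion hxC (hv_sub C hC (mem_insert_of_mem x rfl))
  exact finite_univ_iff.1
    (((hv_lf.point_finite (single x)).biUnion fun C _ => C.2.2).subset hcover)

end NEFin

/-- For any set `X`, the following are equivalent: `X` is finite; `2^{X_d}_f` is compact;
`2^{X_d}_f` is paracompact; `2^{X_d}_f` is strongly locally finite (every point has a
finite minimal open neighborhood and a finite point-closure). -/
theorem stmt13 (X : Type*) :
    List.TFAE
      [Finite X,
       CompactSpace (NEFin X),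
       ParacompactSpace (NEFin X),
       ∀ C : NEFin X,
         (∃ B : Set (NEFin X), IsOpen B ∧ C ∈ B ∧ B.Finite ∧
           ∀ V : Set (NEFin X), IsOpen V → C ∈ V → B ⊆ V) ∧
         (closure {C}).Finite] := by
  tfae_have 1 → 2 := fun _ => inferInstance
  tfae_have 2 → 3 := fun _ => inferInstance
  tfae_have 3 → 1 := fun _ => NEFin.finite_of_paracompactSpace (X := X)
  tfae_have 1 → 4 := fun _ C =>
    ⟨⟨C.subsets, C.isOpen_subsets, C.mem_subsets_self, toFinite _,
      fun _ hV hC => NEFin.subsets_subset_of_isOpen hV hC⟩, toFinite _⟩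
  tfae_have 4 → 1 := fun h => by
    rcases isEmpty_or_nonempty X with _ | ⟨⟨x⟩⟩
    · infer_instance
    · exact NEFin.finite_of_finite_closure_single x (h (NEFin.single x)).2
  tfae_finish
end

section
/- For any infinite set X, the subspace 2^{X_d}_f ∪ {X} of 2^{X_d}_u is homeomorphic to the Alexandroff extension (one-point compactification) of 2^{X_d}_f, and this coincides with the non-Hausdorff cone over 2^{X_d}_f. -/
/-!
Open sets of the upper semifinite topology are closed under passing to nonempty subsets, so closed
subsets of `2^{X_d}_f` are closed under finite supersets, while a compact subset is covered by
finitely many `B(F)`, `F` finite, and so only contains subsets of one finite set. For infinite `X`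
the only closed compact subset of `2^{X_d}_f` is therefore `∅`, and the only neighbourhood of `∞`
in its Alexandroff extension is the whole space. The point `X` of `2^{X_d}_f ∪ {X}` behaves the
same way, since every open set of `2^{X_d}_u` containing `X` contains everything.
-/

open Set Topology TopologicalSpace

open Filter

namespace OnePoint

variable {X Y : Type*}

theorem elim_bijective {y : Y} {f : X → Y} (hf : Function.Injective f) (hrange : range f = {y}ᶜ) :
    Function.Bijective fun p : OnePoint X => p.elim y f := by
  have hy : ∀ x, f x ≠ y := fun x => by simpa [hrange] using mem_range_self (f := f) x
  refine ⟨fun p q hpq => ?_, fun z => ?_⟩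
  · induction p using OnePoint.rec <;> induction q using OnePoint.rec
    · rfl
    · exact absurd hpq.symm (hy _)
    · exact absurd hpq (hy _)
    · exact congrArg _ (hf hpq)
  · by_cases hz : z = y
    · exact ⟨∞, hz.symm⟩
    · obtain ⟨x, rfl⟩ : z ∈ range f := by simpa [hrange] using hz
      exact ⟨x, rfl⟩

variable [TopologicalSpace X] [TopologicalSpace Y]

theorem nhds_infty_eq_top (hX : coclosedCompact X = ⊤) : 𝓝 (∞ : OnePoint X) = ⊤ := by
  rw [nhds_infty_eq, hX, map_top, ← principal_singleton, sup_principal, range_coe_union_infty,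
    principal_univ]

theorem topologicalSpace_eq_generateFrom (hX : coclosedCompact X = ⊤) :
    (inferInstance : TopologicalSpace (OnePoint X)) =
      generateFrom {s | ∞ ∉ s ∧ IsOpen (((↑) : X → OnePoint X) ⁻¹' s)} := by
  refine le_antisymm (le_generateFrom fun s hs => (isOpen_iff_of_notMem hs.1).2 hs.2)
    fun s hs => ?_
  by_cases h : ∞ ∈ s
  · have hs_univ : s = univ := by
      simpa [nhds_infty_eq_top hX] using hs.mem_nhds h
    exact hs_univ ▸ GenerateOpen.univ
  · exact GenerateOpen.basic _ ⟨h, (isOpen_iff_of_notMem h).1 hs⟩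

noncomputable def homeomorphOfIsOpenEmbedding (hX : coclosedCompact X = ⊤) (y : Y) (f : X → Y)
    (hf : IsOpenEmbedding f) (hrange : range f = {y}ᶜ) (hy : 𝓝 y = ⊤) : OnePoint X ≃ₜ Y :=
  let e := Equiv.ofBijective _ (elim_bijective hf.injective hrange)
  have map_nhds : ∀ p, map e (𝓝 p) = 𝓝 (e p) := fun p => by
    induction p using OnePoint.rec with
    | infty =>
      rw [nhds_infty_eq_top hX, map_top, e.range_eq_univ, principal_univ]
      exact hy.symm
    | coe x =>
      rw [nhds_coe_eq, map_map]
      exact hf.map_nhds_eq x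
  e.toHomeomorphOfContinuousOpen
    (continuous_iff_continuousAt.2 fun p => (map_nhds p).le)
    (isOpenMap_iff_nhds_le.2 fun p => (map_nhds p).ge)

end OnePoint

namespace NESet

variable {X : Type*}

theorem isOpen_setOf_subset (U : Set X) : IsOpen {C : NESet X | C.1 ⊆ U} :=
  GenerateOpen.basic _ ⟨U, rfl⟩

theorem specializes_of_subset {C D : NESet X} (h : C.1 ⊆ D.1) : C ⤳ D := by
  rw [Specializes, nhds_generateFrom (a := D)]
  refine le_iInf₂ fun s ⟨hD, U, hU⟩ => ?_
  subst hU
  exact le_principal_iff.2 ((isOpen_setOf_subset U).mem_nhds (h.trans hD))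

variable [Nonempty X]

variable (X) in
def univ : NESet X := ⟨Set.univ, univ_nonempty⟩

theorem nhds_univ : 𝓝 (univ X) = ⊤ :=
  top_unique fun s hs => by
    obtain ⟨t, hts, ht, hut⟩ := mem_nhds_iff.1 hs
    exact mem_top.2 (eq_univ_of_forall fun C =>
      hts ((specializes_of_subset (subset_univ C.1)).mem_open ht hut))

theorem isClosed_singleton_univ : IsClosed {univ X} := by
  have : {univ X}ᶜ = ⋃ x : X, {C : NESet X | C.1 ⊆ {x}ᶜ} := by
    ext C
    simp only [mem_compl_iff, mem_singleton_iff, mem_iUnion, mem_ofPred_eq,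
      subset_compl_singleton_iff]
    constructor
    · intro hC
      by_contra! hC_univ
      exact hC (Subtype.ext (eq_univ_of_forall hC_univ))
    · rintro ⟨x, hx⟩ rfl
      exact hx trivial
  exact isOpen_compl_iff.1 (this ▸ isOpen_iUnion fun x => isOpen_setOf_subset _)

end NESet

/-- `2^{X_d}_f ∪ {X}`, as a subspace of `2^{X_d}_u`. -/
abbrev FinOrUniv (X : Type*) := {C : NESet X // C.1.Finite ∨ C.1 = Set.univ}

namespace FinOrUniv

variable (X : Type*) [Nonempty X]

def univ : FinOrUniv X := ⟨NESet.univ X, Or.inr rfl⟩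

theorem nhds_univ : 𝓝 (univ X) = ⊤ := by
  rw [univ, nhds_subtype_eq_comap, NESet.nhds_univ, comap_top]

theorem isClosed_singleton_univ : IsClosed {univ X} := by
  have : {univ X} = Subtype.val ⁻¹' {NESet.univ X} := by
    ext C
    simp [univ, Subtype.ext_iff]
  exact this ▸ NESet.isClosed_singleton_univ.preimage continuous_subtype_val

end FinOrUniv

namespace NEFin

variable {X : Type*}

theorem isEmbedding_incl : IsEmbedding (incl : NEFin X → NESet X) :=
  ⟨⟨rfl⟩, fun _ _ h => Subtype.ext (congrArg (fun C : NESet X => C.1) h)⟩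

theorem specializes_of_subset {C D : NEFin X} (h : C.1 ⊆ D.1) : C ⤳ D :=
  isEmbedding_incl.isInducing.specializes_iff.1 (NESet.specializes_of_subset h)

theorem exists_finite_bound_of_isCompact {K : Set (NEFin X)} (hK : IsCompact K) :
    ∃ F : Set X, F.Finite ∧ ∀ D ∈ K, D.1 ⊆ F := by
  obtain ⟨t, -, hcover⟩ := hK.elim_nhds_subcover (fun D => incl ⁻¹' {E | E.1 ⊆ D.1})
    fun D _ => ((NESet.isOpen_setOf_subset D.1).preimage isEmbedding_incl.continuous).mem_nhds
      (show D.1 ⊆ D.1 from subset_rfl)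
  refine ⟨⋃ D ∈ t, D.1, t.finite_toSet.biUnion fun D _ => D.2.2, fun E hE => ?_⟩
  obtain ⟨D, hD, hED⟩ := mem_iUnion₂.1 (hcover hE)
  exact hED.trans (subset_biUnion_of_mem (u := fun D : NEFin X => D.1) hD)

theorem coclosedCompact_eq_top [Infinite X] : coclosedCompact (NEFin X) = ⊤ := by
  refine top_unique fun s hs => ?_
  obtain ⟨K, ⟨hKc, hKk⟩, hKs⟩ := hasBasis_coclosedCompact.mem_iff.1 hs
  suffices K = ∅ by simpa [this] using hKs
  refine eq_empty_of_forall_notMem fun C hC => ?_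
  obtain ⟨F, hF, hKF⟩ := exists_finite_bound_of_isCompact hKk
  obtain ⟨x, hx⟩ := hF.infinite_compl.nonempty
  let C' : NEFin X := ⟨insert x C.1, insert_nonempty x C.1, C.2.2.insert x⟩
  have hC' : C' ∈ K := (specializes_of_subset (subset_insert x C.1)).mem_closed hKc hC
  exact hx (hKF C' hC' (mem_insert x C.1))

noncomputable def toFinOrUniv (C : NEFin X) : FinOrUniv X := ⟨C.incl, Or.inl C.2.2⟩

theorem range_toFinOrUniv [Infinite X] : range toFinOrUniv = {FinOrUniv.univ X}ᶜ := by
  ext ⟨C, hC⟩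
  constructor
  · rintro ⟨D, hD⟩ hD_univ
    have : D.1 = Set.univ := congrArg (fun C : FinOrUniv X => C.1.1) (hD.trans hD_univ)
    exact infinite_univ (this ▸ D.2.2)
  · intro hC_univ
    obtain hfin | huniv := hC
    · exact ⟨⟨C.1, C.2, hfin⟩, rfl⟩
    · exact absurd (Subtype.ext (Subtype.ext huniv)) hC_univ

theorem isOpenEmbedding_toFinOrUniv [Infinite X] : IsOpenEmbedding (toFinOrUniv (X := X)) where
  toIsEmbedding :=
    isEmbedding_incl.codRestrict {C | C.1.Finite ∨ C.1 = Set.univ} fun C => Or.inl C.2.2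
  isOpen_range := by
    rw [range_toFinOrUniv]
    exact (FinOrUniv.isClosed_singleton_univ X).isOpen_compl

end NEFin

open OnePoint in
/-- For an infinite set `X`, the subspace `2^{X_d}_f ∪ {X}` of `2^{X_d}_u` is homeomorphic
to the Alexandroff extension (one-point compactification) of `2^{X_d}_f`, and the latter
coincides with the non-Hausdorff cone over `2^{X_d}_f` (whose proper open sets are exactly
the open sets of `2^{X_d}_f`). -/
theorem stmt15 (X : Type*) [Infinite X] :
    Nonempty (({C : NESet X // C.1.Finite ∨ C.1 = Set.univ}) ≃ₜ OnePoint (NEFin X)) ∧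
    (inferInstance : TopologicalSpace (OnePoint (NEFin X))) =
      TopologicalSpace.generateFrom
        {s : Set (OnePoint (NEFin X)) |
          OnePoint.infty ∉ s ∧ IsOpen ((fun C : NEFin X => (C : OnePoint (NEFin X))) ⁻¹' s)} :=
  have hX : coclosedCompact (NEFin X) = ⊤ := NEFin.coclosedCompact_eq_top
  ⟨⟨(homeomorphOfIsOpenEmbedding hX _ _ NEFin.isOpenEmbedding_toFinOrUniv
      NEFin.range_toFinOrUniv (FinOrUniv.nhds_univ X)).symm⟩,
    topologicalSpace_eq_generateFrom hX⟩
end
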